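/- Define β(I) = I·α(I)/(I−1) = I³·sinh(π(I−1)/2)/((I−1)³·sinh(πI/2)) for I ∈ ℝ∖{0,1}, extended by β(0) = 0. Then: (i) β(I) > 0 for all I ≠ 0 (I ≠ 1); (ii) β(I) → +∞ as I → 1 (from either side); (iii) β(I) → e^{π/2} as I → −∞; (iv) β(I) → e^{−π/2} as I → +∞; (v) β is smooth on ℝ∖{1} and β′(I) = 0 if and only if I = 0. -/

import Mathlib

open Real Filter Topology

/-- `β(I) = I³ sinh(π(I-1)/2) / ((I-1)³ sinh(πI/2))`. Note that by Lean's
division-by-zero convention this function takes the value `0` at `I = 0`, which is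
exactly the continuous (removable-singularity) extension `β(0) = 0`. -/
noncomputable def betaFn (I : ℝ) : ℝ :=
  I ^ 3 * Real.sinh (π * (I - 1) / 2) / ((I - 1) ^ 3 * Real.sinh (π * I / 2))

lemma cube_sinh_pos {x : ℝ} (hx : x ≠ 0) : 0 < x ^ 3 * Real.sinh (π * x / 2) := by
  rcases hx.lt_or_gt with h | h
  · have hsq : 0 < x ^ 2 := by positivity
    have h1 : x ^ 3 < 0 := by nlinarith
    have h2 : Real.sinh (π * x / 2) < 0 := Real.sinh_neg_iff.mpr (by nlinarith [Real.pi_pos])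
    exact mul_pos_of_neg_of_neg h1 h2
  · exact mul_pos (pow_pos h 3) (Real.sinh_pos_iff.mpr (by nlinarith [Real.pi_pos]))

lemma betaFn_pos {I : ℝ} (h0 : I ≠ 0) (h1 : I ≠ 1) : 0 < betaFn I := by
  have key := mul_pos (cube_sinh_pos h0) (cube_sinh_pos (x := I - 1) (sub_ne_zero.mpr h1))
  have hab : 0 < (I ^ 3 * Real.sinh (π * (I - 1) / 2)) * ((I - 1) ^ 3 * Real.sinh (π * I / 2)) := by
    nlinarith [key]
  exact div_pos_iff.mpr (mul_pos_iff.mp hab)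

lemma exp_pi_sub_one {I : ℝ} (h0 : I ≠ 0) : Real.exp (π * I) - 1 ≠ 0 := by
  intro h
  have h2 : Real.exp (π * I) = 1 := by linarith
  simp [mul_eq_zero, Real.pi_ne_zero, h0] at h2

lemma betaFn_eq {I : ℝ} (h0 : I ≠ 0) (h1 : I ≠ 1) :
    betaFn I = (I / (I - 1)) ^ 3 *
      ((Real.exp (π * I) * Real.exp (-(π / 2)) - Real.exp (π / 2)) / (Real.exp (π * I) - 1)) := by
  have he : Real.exp (π * I) - 1 ≠ 0 := exp_pi_sub_one h0
  have e1 : π * (I - 1) / 2 = π * I / 2 - π / 2 := by ring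
  have hE : Real.exp (π * I) = Real.exp (π * I / 2) * Real.exp (π * I / 2) := by
    rw [← Real.exp_add]; ring_nf
  have h3 : I - 1 ≠ 0 := sub_ne_zero.mpr h1
  have hu := Real.exp_ne_zero (π * I / 2)
  have hv := Real.exp_ne_zero (π / 2)
  rw [hE] at he
  rw [betaFn, Real.sinh_eq, Real.sinh_eq, e1, Real.exp_neg, Real.exp_neg, Real.exp_neg,
    Real.exp_sub, hE]
  field_simp

lemma tendsto_inv_atBot : Tendsto (fun I : ℝ => I⁻¹) atBot (𝓝 0) := by
  have h := tendsto_inv_atTop_zero (𝕜 := ℝ) |>.comp tendsto_neg_atBot_atTop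
  have e : (fun I : ℝ => I⁻¹) = fun I : ℝ => -(-I)⁻¹ := by funext I; simp [inv_neg]
  rw [e]
  simpa using h.neg

lemma ratio_cube_atBot : Tendsto (fun I : ℝ => (I / (I - 1)) ^ 3) atBot (𝓝 1) := by
  have ha : Tendsto (fun I : ℝ => 1 - I⁻¹) atBot (𝓝 (1 - 0)) :=
    tendsto_const_nhds.sub tendsto_inv_atBot
  have h2 := (ha.inv₀ (by norm_num)).pow 3
  norm_num at h2
  refine h2.congr' ?_
  filter_upwards [eventually_lt_atBot (0:ℝ)] with I hI
  have h0 : I ≠ 0 := hI.ne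
  have h1 : I - 1 ≠ 0 := by intro h; nlinarith
  field_simp

lemma ratio_cube_atTop : Tendsto (fun I : ℝ => (I / (I - 1)) ^ 3) atTop (𝓝 1) := by
  have ha : Tendsto (fun I : ℝ => 1 - I⁻¹) atTop (𝓝 (1 - 0)) :=
    tendsto_const_nhds.sub tendsto_inv_atTop_zero
  have h2 := (ha.inv₀ (by norm_num)).pow 3
  norm_num at h2
  refine h2.congr' ?_
  filter_upwards [eventually_gt_atTop (1:ℝ)] with I hI
  have h0 : I ≠ 0 := by intro h; nlinarith
  have h1 : I - 1 ≠ 0 := by intro h; nlinarith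
  field_simp

lemma betaFn_atBot : Tendsto betaFn atBot (𝓝 (Real.exp (π / 2))) := by
  have hE : Tendsto (fun I : ℝ => Real.exp (π * I)) atBot (𝓝 0) :=
    Real.tendsto_exp_atBot.comp (tendsto_id.const_mul_atBot Real.pi_pos)
  have hnum : Tendsto (fun I : ℝ => Real.exp (π * I) * Real.exp (-(π / 2)) - Real.exp (π / 2))
      atBot (𝓝 (0 * Real.exp (-(π / 2)) - Real.exp (π / 2))) :=
    (hE.mul_const _).sub tendsto_const_nhds
  have hden : Tendsto (fun I : ℝ => Real.exp (π * I) - 1) atBot (𝓝 (0 - 1)) :=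
    hE.sub tendsto_const_nhds
  have h := (ratio_cube_atBot.mul (hnum.div hden (by norm_num)))
  have hval : (1 : ℝ) * ((0 * Real.exp (-(π / 2)) - Real.exp (π / 2)) / (0 - 1)) =
      Real.exp (π / 2) := by norm_num
  rw [hval] at h
  refine h.congr' ?_
  filter_upwards [eventually_lt_atBot (0:ℝ)] with I hI
  exact (betaFn_eq hI.ne (by intro h; rw [h] at hI; norm_num at hI)).symm

lemma betaFn_atTop : Tendsto betaFn atTop (𝓝 (Real.exp (-(π / 2)))) := by
  have hπ : Tendsto (fun I : ℝ => π * I) atTop atTop := tendsto_id.const_mul_atTop Real.pi_pos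
  have hE : Tendsto (fun I : ℝ => (Real.exp (π * I))⁻¹) atTop (𝓝 0) :=
    tendsto_inv_atTop_zero.comp (Real.tendsto_exp_atTop.comp hπ)
  have hnum : Tendsto (fun I : ℝ => Real.exp (-(π / 2)) - Real.exp (π / 2) * (Real.exp (π * I))⁻¹)
      atTop (𝓝 (Real.exp (-(π / 2)) - Real.exp (π / 2) * 0)) :=
    tendsto_const_nhds.sub (tendsto_const_nhds.mul hE)
  have hden : Tendsto (fun I : ℝ => 1 - (Real.exp (π * I))⁻¹) atTop (𝓝 (1 - 0)) :=
    tendsto_const_nhds.sub hE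
  have h := ratio_cube_atTop.mul (hnum.div hden (by norm_num))
  have hval : (1 : ℝ) * ((Real.exp (-(π / 2)) - Real.exp (π / 2) * 0) / (1 - 0)) =
      Real.exp (-(π / 2)) := by norm_num
  rw [hval] at h
  refine h.congr' ?_
  filter_upwards [eventually_gt_atTop (1:ℝ)] with I hI
  have h0 : I ≠ 0 := by intro h; rw [h] at hI; norm_num at hI
  have h1 : I ≠ 1 := hI.ne'
  rw [betaFn_eq h0 h1]
  have he : Real.exp (π * I) - 1 ≠ 0 := by
    have : (1:ℝ) < Real.exp (π * I) := by
      rw [← Real.exp_zero]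
      exact Real.exp_lt_exp.mpr (by nlinarith [Real.pi_pos])
    intro h; nlinarith
  have hne := Real.exp_ne_zero (π * I)
  congr 1
  simp only [Pi.div_apply]
  field_simp

lemma sinh_div_cube : Tendsto (fun u : ℝ => Real.sinh (π * u / 2) / u ^ 3) (𝓝[≠] 0) atTop := by
  have hslope : Tendsto (fun u : ℝ => Real.sinh (π * u / 2) / u) (𝓝[≠] 0) (𝓝 (π / 2)) := by
    have hd : HasDerivAt (fun u : ℝ => Real.sinh (π * u / 2)) (π / 2) 0 := by
      have h1 : HasDerivAt (fun u : ℝ => π * u / 2) (π / 2) 0 := by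
        simpa using ((hasDerivAt_id (0:ℝ)).const_mul π).div_const 2
      have := (Real.hasDerivAt_sinh (π * 0 / 2)).comp 0 h1
      simp only [mul_zero, zero_div, Real.cosh_zero, one_mul] at this
      exact this
    have := hasDerivAt_iff_tendsto_slope.mp hd
    refine this.congr ?_
    intro u
    simp [slope_def_field]
  have hsq : Tendsto (fun u : ℝ => (u ^ 2)⁻¹) (𝓝[≠] 0) atTop := by
    apply tendsto_inv_nhdsGT_zero.comp
    apply tendsto_nhdsWithin_of_tendsto_nhds_of_eventually_within
    · have h0 : Tendsto (fun u : ℝ => u ^ 2) (𝓝 0) (𝓝 (0 ^ 2)) := (continuous_pow 2).continuousAt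
      norm_num at h0
      exact h0.mono_left nhdsWithin_le_nhds
    · filter_upwards [self_mem_nhdsWithin] with u hu
      exact lt_of_le_of_ne (sq_nonneg u) (Ne.symm (pow_ne_zero 2 hu))
  have h := hslope.pos_mul_atTop (by positivity) hsq
  refine h.congr' ?_
  filter_upwards [self_mem_nhdsWithin] with u hu
  have : u ≠ 0 := hu
  field_simp

lemma betaFn_at_one : Tendsto betaFn (𝓝[≠] (1:ℝ)) atTop := by
  have hmap : Tendsto (fun I : ℝ => I - 1) (𝓝[≠] (1:ℝ)) (𝓝[≠] (0:ℝ)) := by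
    apply tendsto_nhdsWithin_of_tendsto_nhds_of_eventually_within
    · have : Tendsto (fun I : ℝ => I - 1) (𝓝 1) (𝓝 (1 - 1)) :=
        (continuous_id.sub continuous_const).continuousAt
      norm_num at this
      exact this.mono_left nhdsWithin_le_nhds
    · filter_upwards [self_mem_nhdsWithin] with I hI
      simpa [sub_eq_zero] using hI
  have hfac2 : Tendsto (fun I : ℝ => Real.sinh (π * (I - 1) / 2) / (I - 1) ^ 3)
      (𝓝[≠] (1:ℝ)) atTop := sinh_div_cube.comp hmap
  have hfac1 : Tendsto (fun I : ℝ => I ^ 3 / Real.sinh (π * I / 2)) (𝓝[≠] (1:ℝ))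
      (𝓝 (1 ^ 3 / Real.sinh (π * 1 / 2))) := by
    have hs : Real.sinh (π * 1 / 2) ≠ 0 := by
      rw [Real.sinh_ne_zero]
      positivity
    have hc : Continuous fun I : ℝ => Real.sinh (π * I / 2) := by fun_prop
    exact (((continuous_pow 3).continuousAt).div hc.continuousAt hs).tendsto.mono_left
      nhdsWithin_le_nhds
  have hpos : (0:ℝ) < 1 ^ 3 / Real.sinh (π * 1 / 2) := by
    have : 0 < Real.sinh (π * 1 / 2) := Real.sinh_pos_iff.mpr (by positivity)
    positivity
  have h := hfac1.pos_mul_atTop hpos hfac2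
  refine h.congr ?_
  intro I
  rw [betaFn, div_mul_div_comm, mul_comm ((I-1)^3) _]

noncomputable def psiFn (t : ℝ) : ℝ :=
  π / 2 * Real.sinh (π / 2) * (t ^ 2 - 1 / 4) - 3 / 2 * Real.cosh (π * t)
    + 3 / 2 * Real.cosh (π / 2)

lemma psiFn_hasDeriv (t : ℝ) :
    HasDerivAt psiFn (π / 2 * Real.sinh (π / 2) * (2 * t) - 3 / 2 * (Real.sinh (π * t) * π)) t := by
  have h1 : HasDerivAt (fun t : ℝ => t ^ 2 - 1 / 4) (2 * t) t := by
    simpa using (hasDerivAt_pow 2 t).sub_const (1 / 4)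
  have h2 : HasDerivAt (fun t : ℝ => π * t) π t := by
    simpa using (hasDerivAt_id t).const_mul π
  have h3 : HasDerivAt (fun t : ℝ => Real.cosh (π * t)) (Real.sinh (π * t) * π) t :=
    (Real.hasDerivAt_cosh (π * t)).comp t h2
  have := ((h1.const_mul (π / 2 * Real.sinh (π / 2))).sub
    (h3.const_mul (3 / 2))).add_const (3 / 2 * Real.cosh (π / 2))
  exact this

lemma sinh_half_pi_lt : Real.sinh (π / 2) < 3 * (π / 2) := by
  have hπ4 : π < 3.15 := Real.pi_lt_d2
  have h1 : Real.exp (π / 2) < Real.exp 2 := Real.exp_lt_exp.mpr (by nlinarith)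
  have h2 : Real.exp 2 < 7.39 := by
    have he := Real.exp_one_lt_d9
    have hp := Real.exp_pos 1
    calc Real.exp 2 = Real.exp 1 * Real.exp 1 := by rw [← Real.exp_add]; norm_num
    _ < 7.39 := by nlinarith
  have h3 : 0 < Real.exp (-(π / 2)) := Real.exp_pos _
  have hπ : 3 < π := Real.pi_gt_three
  rw [Real.sinh_eq]
  nlinarith

lemma psiFn_anti : StrictAntiOn psiFn (Set.Ici (0 : ℝ)) := by
  apply strictAntiOn_of_deriv_neg (convex_Ici 0)
  · have : Continuous psiFn := by unfold psiFn; fun_prop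
    exact this.continuousOn
  · intro t ht
    rw [interior_Ici] at ht
    have ht' : (0 : ℝ) < t := ht
    rw [(psiFn_hasDeriv t).deriv]
    have h1 : π * t < Real.sinh (π * t) := Real.self_lt_sinh_iff.mpr (by positivity)
    have h2 := sinh_half_pi_lt
    have hπ := Real.pi_gt_three
    nlinarith [mul_pos Real.pi_pos ht', mul_lt_mul_of_pos_right h2 ht']

lemma psiFn_half : psiFn (1 / 2) = 0 := by
  have h : π * (1 / 2) = π / 2 := by ring
  rw [psiFn, h]
  norm_num

lemma psiFn_ne {t : ℝ} (ht : 0 ≤ t) (hne : t ≠ 1 / 2) : psiFn t ≠ 0 := by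
  rcases hne.lt_or_gt with h | h
  · have := psiFn_anti (Set.mem_Ici.mpr ht) (Set.mem_Ici.mpr (by norm_num)) h
    rw [psiFn_half] at this
    exact this.ne'
  · have := psiFn_anti (Set.mem_Ici.mpr (by norm_num : (0:ℝ) ≤ 1 / 2)) (Set.mem_Ici.mpr ht) h
    rw [psiFn_half] at this
    exact this.ne

lemma psiFn_abs (t : ℝ) : psiFn t = psiFn |t| := by
  rw [psiFn, psiFn, sq_abs]
  have : π * |t| = |π * t| := by rw [abs_mul, abs_of_pos Real.pi_pos]
  rw [this, Real.cosh_abs]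

lemma phi_eq (I : ℝ) :
    π / 2 * Real.sinh (π / 2) * (I * (I - 1))
      - 3 * Real.sinh (π * I / 2) * Real.sinh (π * (I - 1) / 2) = psiFn (I - 1 / 2) := by
  rw [psiFn, Real.sinh_eq, Real.sinh_eq, Real.sinh_eq, Real.cosh_eq, Real.cosh_eq]
  have e1 : π * (I - 1) / 2 = π * I / 2 - π / 2 := by ring
  have e2 : π * (I - 1 / 2) = π * I / 2 + (π * I / 2 - π / 2) := by ring
  rw [e1, e2]
  simp only [Real.exp_add, Real.exp_sub, Real.exp_neg]
  have hu := Real.exp_ne_zero (π * I / 2)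
  have hv := Real.exp_ne_zero (π / 2)
  field_simp
  ring

lemma num_hasDeriv (I : ℝ) : HasDerivAt (fun I : ℝ => I ^ 3 * Real.sinh (π * (I - 1) / 2))
    (3 * I ^ 2 * Real.sinh (π * (I - 1) / 2)
      + I ^ 3 * (Real.cosh (π * (I - 1) / 2) * (π / 2))) I := by
  have h1 : HasDerivAt (fun I : ℝ => π * (I - 1) / 2) (π / 2) I := by
    simpa using (((hasDerivAt_id I).sub_const 1).const_mul π).div_const 2
  have h2 : HasDerivAt (fun I : ℝ => Real.sinh (π * (I - 1) / 2))
      (Real.cosh (π * (I - 1) / 2) * (π / 2)) I := (Real.hasDerivAt_sinh _).comp I h1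
  exact ((hasDerivAt_pow 3 I).mul h2).congr_deriv (by norm_num)

lemma den_hasDeriv (I : ℝ) : HasDerivAt (fun I : ℝ => (I - 1) ^ 3 * Real.sinh (π * I / 2))
    (3 * (I - 1) ^ 2 * Real.sinh (π * I / 2)
      + (I - 1) ^ 3 * (Real.cosh (π * I / 2) * (π / 2))) I := by
  have h1 : HasDerivAt (fun I : ℝ => π * I / 2) (π / 2) I := by
    simpa using ((hasDerivAt_id I).const_mul π).div_const 2
  have h2 : HasDerivAt (fun I : ℝ => Real.sinh (π * I / 2))
      (Real.cosh (π * I / 2) * (π / 2)) I := (Real.hasDerivAt_sinh _).comp I h1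
  have h3 : HasDerivAt (fun I : ℝ => (I - 1) ^ 3) (3 * (I - 1) ^ 2) I := by
    have := (hasDerivAt_pow 3 (I - 1)).comp I ((hasDerivAt_id I).sub_const 1)
    simpa [Function.comp_def] using this
  exact h3.mul h2

lemma key_identity (I : ℝ) :
    (3 * I ^ 2 * Real.sinh (π * (I - 1) / 2)
        + I ^ 3 * (Real.cosh (π * (I - 1) / 2) * (π / 2))) * ((I - 1) ^ 3 * Real.sinh (π * I / 2))
      - I ^ 3 * Real.sinh (π * (I - 1) / 2) * (3 * (I - 1) ^ 2 * Real.sinh (π * I / 2)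
        + (I - 1) ^ 3 * (Real.cosh (π * I / 2) * (π / 2)))
      = I ^ 2 * (I - 1) ^ 2 * (π / 2 * Real.sinh (π / 2) * (I * (I - 1))
        - 3 * Real.sinh (π * I / 2) * Real.sinh (π * (I - 1) / 2)) := by
  have e1 : π * (I - 1) / 2 = π * I / 2 - π / 2 := by ring
  have h := Real.cosh_sq_sub_sinh_sq (π * I / 2)
  rw [e1, Real.sinh_sub, Real.cosh_sub]
  linear_combination (π / 2 * Real.sinh (π / 2) * I ^ 3 * (I - 1) ^ 3) * h

lemma sinh_slope : Tendsto (fun u : ℝ => Real.sinh (π * u / 2) / u) (𝓝[≠] 0) (𝓝 (π / 2)) := by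
  have hd : HasDerivAt (fun u : ℝ => Real.sinh (π * u / 2)) (π / 2) 0 := by
    have h1 : HasDerivAt (fun u : ℝ => π * u / 2) (π / 2) 0 := by
      simpa using ((hasDerivAt_id (0 : ℝ)).const_mul π).div_const 2
    have := (Real.hasDerivAt_sinh (π * 0 / 2)).comp 0 h1
    simp only [mul_zero, zero_div, Real.cosh_zero, one_mul] at this
    exact this
  have := hasDerivAt_iff_tendsto_slope.mp hd
  refine this.congr ?_
  intro u
  simp [slope_def_field]

lemma analyticAt_sinh_comp {f : ℝ → ℝ} {x : ℝ} (hf : AnalyticAt ℝ f x) :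
    AnalyticAt ℝ (fun z => Real.sinh (f z)) x :=
  ((Real.contDiff_sinh (n := (⊤ : WithTop ℕ∞))).contDiffAt.analyticAt).comp hf

lemma analyticAt_aux1 (x : ℝ) : AnalyticAt ℝ (fun z : ℝ => Real.sinh (π * z / 2)) x :=
  analyticAt_sinh_comp ((analyticAt_const.mul analyticAt_id).div analyticAt_const (by norm_num))

lemma analyticAt_aux2 (x : ℝ) : AnalyticAt ℝ (fun z : ℝ => Real.sinh (π * (z - 1) / 2)) x :=
  analyticAt_sinh_comp ((analyticAt_const.mul ((analyticAt_id).sub analyticAt_const)).div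
    analyticAt_const (by norm_num))

lemma sinh_factor : ∃ g : ℝ → ℝ, AnalyticAt ℝ g 0 ∧ g 0 ≠ 0 ∧
    ∀ᶠ z in 𝓝 (0 : ℝ), Real.sinh (π * z / 2) = z * g z := by
  have hf : AnalyticAt ℝ (fun z : ℝ => Real.sinh (π * z / 2)) 0 := analyticAt_aux1 0
  have hny : ¬ ∀ᶠ z in 𝓝 (0 : ℝ), Real.sinh (π * z / 2) = 0 := by
    intro h
    have h2 : ∀ᶠ z in 𝓝[≠] (0 : ℝ), Real.sinh (π * z / 2) = 0 := h.filter_mono nhdsWithin_le_nhds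
    rcases (h2.and self_mem_nhdsWithin).exists with ⟨z, hz, hz0⟩
    have : π * z / 2 = 0 := Real.sinh_eq_zero.mp hz
    have hz' : π * z = 0 := by linarith
    rcases mul_eq_zero.mp hz' with h' | h'
    · exact Real.pi_ne_zero h'
    · exact hz0 h'
  obtain ⟨n, g, hg, hg0, heq⟩ := hf.exists_eventuallyEq_pow_smul_nonzero_iff.mpr hny
  match n with
  | 0 =>
    exfalso
    have h0 := heq.self_of_nhds
    simp at h0
    exact hg0 h0.symm
  | 1 =>
    refine ⟨g, hg, hg0, ?_⟩
    filter_upwards [heq] with z hz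
    simpa [smul_eq_mul] using hz
  | (n + 2) =>
    exfalso
    have hslope := sinh_slope
    have h2 : Tendsto (fun z : ℝ => Real.sinh (π * z / 2) / z) (𝓝[≠] 0) (𝓝 0) := by
      have hcont : Tendsto (fun z : ℝ => z ^ (n + 1) * g z) (𝓝 0) (𝓝 (0 ^ (n + 1) * g 0)) :=
        ((continuous_pow (n + 1)).continuousAt).mul hg.continuousAt
      have hz : (0 : ℝ) ^ (n + 1) * g 0 = 0 := by simp
      rw [hz] at hcont
      refine (hcont.mono_left nhdsWithin_le_nhds).congr' ?_
      filter_upwards [heq.filter_mono nhdsWithin_le_nhds, self_mem_nhdsWithin] with z hz hz0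
      rw [hz, smul_eq_mul, sub_zero, eq_div_iff hz0, pow_succ]
      ring
    have := tendsto_nhds_unique hslope h2
    exact Real.pi_ne_zero (by linarith)

lemma betaFn_loc : ∃ q : ℝ → ℝ, AnalyticAt ℝ (fun I => I ^ 2 * q I) 0 ∧
    DifferentiableAt ℝ q 0 ∧ betaFn =ᶠ[𝓝 (0 : ℝ)] fun I => I ^ 2 * q I := by
  obtain ⟨g, hg, hg0, heq⟩ := sinh_factor
  have hden : AnalyticAt ℝ (fun I : ℝ => (I - 1) ^ 3 * g I) 0 :=
    (((analyticAt_id).sub analyticAt_const).pow 3).mul hg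
  have hden0 : ((0 : ℝ) - 1) ^ 3 * g 0 ≠ 0 := by
    intro h
    rcases mul_eq_zero.mp h with h' | h'
    · norm_num at h'
    · exact hg0 h'
  have hq : AnalyticAt ℝ (fun I : ℝ => Real.sinh (π * (I - 1) / 2) / ((I - 1) ^ 3 * g I)) 0 :=
    (analyticAt_aux2 0).div hden hden0
  refine ⟨_, ((analyticAt_id.pow 2).mul hq), (hq.contDiffAt (n := 1)).differentiableAt one_ne_zero, ?_⟩
  have hg_ne : ∀ᶠ z in 𝓝 (0 : ℝ), g z ≠ 0 := hg.continuousAt.eventually_ne hg0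
  filter_upwards [heq, hg_ne] with z hz hgz
  by_cases h : z = 0
  · subst h
    simp [betaFn]
  · rw [betaFn, hz,
      show z ^ 3 * Real.sinh (π * (z - 1) / 2)
        = z * (z ^ 2 * Real.sinh (π * (z - 1) / 2)) from by ring,
      show (z - 1) ^ 3 * (z * g z) = z * ((z - 1) ^ 3 * g z) from by ring,
      mul_div_mul_left _ _ h, mul_div_assoc]

lemma betaFn_contDiffAt_zero : ContDiffAt ℝ (⊤ : WithTop ℕ∞) betaFn 0 := by
  obtain ⟨q, hA, _, heq⟩ := betaFn_loc
  exact hA.contDiffAt.congr_of_eventuallyEq heq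

lemma betaFn_deriv_zero : deriv betaFn 0 = 0 := by
  obtain ⟨q, hA, hq, heq⟩ := betaFn_loc
  rw [heq.deriv_eq]
  rw [deriv_fun_mul (by fun_prop) hq]
  simp

lemma betaFn_analyticAt {I : ℝ} (h0 : I ≠ 0) (h1 : I ≠ 1) : AnalyticAt ℝ betaFn I := by
  have hden : ((I - 1) ^ 3 * Real.sinh (π * I / 2)) ≠ 0 := by
    apply mul_ne_zero (pow_ne_zero _ (sub_ne_zero.mpr h1))
    rw [Real.sinh_ne_zero]
    intro h
    rcases mul_eq_zero.mp (by linarith : π * I = 0) with h' | h'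
    · exact Real.pi_ne_zero h'
    · exact h0 h'
  exact ((analyticAt_id.pow 3).mul (analyticAt_aux2 I)).div
    ((((analyticAt_id).sub analyticAt_const).pow 3).mul (analyticAt_aux1 I)) hden

lemma betaFn_smooth : ContDiffOn ℝ (⊤ : WithTop ℕ∞) betaFn {(1 : ℝ)}ᶜ := by
  intro x hx
  have hx1 : x ≠ 1 := hx
  by_cases hx0 : x = 0
  · subst hx0
    exact betaFn_contDiffAt_zero.contDiffWithinAt
  · exact ((betaFn_analyticAt hx0 hx1).contDiffAt).contDiffWithinAt

lemma den_ne {I : ℝ} (h0 : I ≠ 0) (h1 : I ≠ 1) :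
    (I - 1) ^ 3 * Real.sinh (π * I / 2) ≠ 0 := by
  apply mul_ne_zero (pow_ne_zero _ (sub_ne_zero.mpr h1))
  rw [Real.sinh_ne_zero]
  intro h
  rcases mul_eq_zero.mp (by linarith : π * I = 0) with h' | h'
  · exact Real.pi_ne_zero h'
  · exact h0 h'

lemma betaFn_deriv_ne {I : ℝ} (h0 : I ≠ 0) (h1 : I ≠ 1) : deriv betaFn I ≠ 0 := by
  have hD0 := den_ne h0 h1
  have hder : HasDerivAt betaFn
      (((3 * I ^ 2 * Real.sinh (π * (I - 1) / 2)
          + I ^ 3 * (Real.cosh (π * (I - 1) / 2) * (π / 2))) * ((I - 1) ^ 3 * Real.sinh (π * I / 2))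
        - I ^ 3 * Real.sinh (π * (I - 1) / 2) * (3 * (I - 1) ^ 2 * Real.sinh (π * I / 2)
          + (I - 1) ^ 3 * (Real.cosh (π * I / 2) * (π / 2))))
        / ((I - 1) ^ 3 * Real.sinh (π * I / 2)) ^ 2) I :=
    (num_hasDeriv I).div (den_hasDeriv I) hD0
  rw [hder.deriv]
  intro hzero
  rw [div_eq_zero_iff] at hzero
  rcases hzero with hnum | hden2
  · rw [key_identity I, phi_eq I] at hnum
    have hpsi : psiFn (I - 1 / 2) ≠ 0 := by
      rw [psiFn_abs]
      apply psiFn_ne (abs_nonneg _)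
      intro habs
      rcases (abs_eq (by norm_num : (0:ℝ) ≤ 1 / 2)).mp habs with h | h
      · exact h1 (by linarith)
      · exact h0 (by linarith)
    have hI2 : I ^ 2 ≠ 0 := pow_ne_zero _ h0
    have hI12 : (I - 1) ^ 2 ≠ 0 := pow_ne_zero _ (sub_ne_zero.mpr h1)
    rcases mul_eq_zero.mp hnum with h | h
    · rcases mul_eq_zero.mp h with h | h
      · exact hI2 h
      · exact hI12 h
    · exact hpsi h
  · exact pow_ne_zero 2 hD0 hden2

/-- Properties of `β`: positivity off `{0,1}`, `β → +∞` at `I = 1`,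
`β → e^{π/2}` at `-∞`, `β → e^{-π/2}` at `+∞`, smoothness on `ℝ \ {1}`, and
`β′(I) = 0` exactly at `I = 0`. -/
theorem betaFn_properties :
    (∀ I : ℝ, I ≠ 0 → I ≠ 1 → 0 < betaFn I) ∧
    Tendsto betaFn (𝓝[≠] 1) atTop ∧
    Tendsto betaFn atBot (𝓝 (Real.exp (π / 2))) ∧
    Tendsto betaFn atTop (𝓝 (Real.exp (-(π / 2)))) ∧
    ContDiffOn ℝ (⊤ : ℕ∞) betaFn {(1 : ℝ)}ᶜ ∧
    (∀ I : ℝ, I ≠ 1 → (deriv betaFn I = 0 ↔ I = 0)) := by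
  refine ⟨fun I h0 h1 => betaFn_pos h0 h1, betaFn_at_one, betaFn_atBot, betaFn_atTop,
    betaFn_smooth.of_le le_top, fun I h1 => ?_⟩
  by_cases h0 : I = 0
  · subst h0
    simp [betaFn_deriv_zero]
  · simp only [h0, iff_false]
    exact betaFn_deriv_ne h0 h1
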